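/- arXiv:1605.06918 — 2 statements merged into one kernel-verified Lean document; each statement's English description precedes it below -/
import Mathlib

section
/- For every n ≥ 1, the Roman domination number of the path P_n equals ⌈2n/3⌉. -/
variable {V : Type*}

/-- A Roman dominating function: every vertex with value 0 has a neighbor with value 2. -/
def IsRDF (G : SimpleGraph V) (f : V → Fin 3) : Prop :=
  ∀ v, f v = 0 → ∃ u, G.Adj u v ∧ f u = 2

/-- The weight of a Roman dominating function. -/
def romanWeight [Fintype V] (f : V → Fin 3) : ℕ := ∑ v, (f v : ℕ)

/-- The Roman domination number. -/
noncomputable def gammaR [Fintype V] (G : SimpleGraph V) : ℕ :=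
  sInf {k | ∃ f : V → Fin 3, IsRDF G f ∧ romanWeight f = k}

/-- A dominating set. -/
def IsDomSet (G : SimpleGraph V) (D : Set V) : Prop :=
  ∀ v, v ∈ D ∨ ∃ u ∈ D, G.Adj u v

/-- The domination number. -/
noncomputable def gamma [Fintype V] (G : SimpleGraph V) : ℕ :=
  sInf {k | ∃ D : Set V, IsDomSet G D ∧ D.ncard = k}

/-- The generalized Sierpiński graph `S(G,t)` on words of length `t` over `V`. -/
def sierpinski (G : SimpleGraph V) (t : ℕ) : SimpleGraph (Fin t → V) where
  Adj x y := ∃ i : Fin t, (∀ j, j < i → x j = y j) ∧ G.Adj (x i) (y i) ∧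
    (∀ j, i < j → x j = y i ∧ y j = x i)
  symm := by
    constructor
    rintro x y ⟨i, h1, h2, h3⟩
    exact ⟨i, fun j hj => (h1 j hj).symm, h2.symm, fun j hj => ⟨(h3 j hj).2, (h3 j hj).1⟩⟩
  loopless := by
    constructor
    rintro x ⟨i, -, h2, -⟩
    exact G.irrefl h2
/-!
A vertex of value 0 needs a neighbour of value 2, and a vertex of degree at most `Δ` serves
at most `Δ` of them. With `nₖ` vertices of value `k` this gives `n₀ ≤ Δ n₂`, while the
weight is `n₁ + 2 n₂`; for `Δ = 2` it follows that `3 · weight ≥ 2n`. Conversely, on the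
path (vertices numbered from 0) put 2 on every vertex `≡ 1 mod 3`, and 1 on the last vertex
when it is `≡ 0 mod 3` and hence has no such neighbour: this has weight `⌈2n/3⌉`.
-/

open Finset SimpleGraph

section RomanDomination

variable {V : Type*} [Fintype V]

lemma romanWeight_eq_card_add_two_mul_card (f : V → Fin 3) :
    romanWeight f = #{v | f v = 1} + 2 * #{v | f v = 2} := by
  rw [romanWeight, ← sum_fiberwise' univ f (fun k : Fin 3 => (k : ℕ))]
  simp [Fin.sum_univ_three, mul_comm]

lemma card_eq_card_add_card_add_card (f : V → Fin 3) :
    Fintype.card V = #{v | f v = 0} + #{v | f v = 1} + #{v | f v = 2} := by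
  rw [← card_univ, card_eq_sum_card_fiberwise (f := f) (t := univ) (by simp), Fin.sum_univ_three]

lemma IsRDF.card_filter_eq_zero_le [DecidableEq V] {G : SimpleGraph V} [DecidableRel G.Adj]
    {f : V → Fin 3} (hf : IsRDF G f) {Δ : ℕ} (hΔ : ∀ v, G.degree v ≤ Δ) :
    #{v | f v = 0} ≤ #{v | f v = 2} * Δ := by
  have hsub : ({v | f v = 0} : Finset V) ⊆
      ({v | f v = 2} : Finset V).biUnion (G.neighborFinset ·) := by
    intro v hv
    obtain ⟨u, hadj, hu⟩ := hf v (mem_filter.1 hv).2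
    exact mem_biUnion.2 ⟨u, by simpa using hu, by simpa using hadj⟩
  exact (card_le_card hsub).trans <|
    card_biUnion_le_card_mul _ _ _ fun u _ => (card_neighborFinset_eq_degree G u).trans_le (hΔ u)

lemma IsRDF.two_mul_card_le [DecidableEq V] {G : SimpleGraph V} [DecidableRel G.Adj]
    {f : V → Fin 3} (hf : IsRDF G f) {Δ : ℕ} (hΔ : ∀ v, G.degree v ≤ Δ) (hΔ₁ : 1 ≤ Δ) :
    2 * Fintype.card V ≤ (Δ + 1) * romanWeight f := by
  have h₀ := hf.card_filter_eq_zero_le hΔ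
  rw [card_eq_card_add_card_add_card f, romanWeight_eq_card_add_two_mul_card]
  nlinarith

lemma gammaR_eq_romanWeight_of_forall_le {G : SimpleGraph V} {f : V → Fin 3}
    (hf : IsRDF G f) (hmin : ∀ g, IsRDF G g → romanWeight f ≤ romanWeight g) :
    gammaR G = romanWeight f :=
  le_antisymm (Nat.sInf_le ⟨f, hf, rfl⟩)
    (le_csInf ⟨_, f, hf, rfl⟩ fun _ ⟨g, hg, hk⟩ => hk ▸ hmin g hg)

end RomanDomination

lemma SimpleGraph.pathGraph_degree_le_two {n : ℕ} [DecidableRel (pathGraph n).Adj] (v : Fin n) :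
    (pathGraph n).degree v ≤ 2 := by
  rw [← card_neighborFinset_eq_degree]
  calc _ ≤ #({v.val - 1, v.val + 1} : Finset ℕ) :=
        card_le_card_of_injOn Fin.val (fun u hu => by simp [pathGraph_adj] at hu ⊢; omega)
          Fin.val_injective.injOn
    _ ≤ 2 := card_le_two

lemma sum_range_ite_mod_three_eq_one (n : ℕ) :
    ∑ i ∈ range n, (if i % 3 = 1 then 2 else 0) = 2 * ((n + 1) / 3) := by
  induction n with
  | zero => rfl
  | succ n ih =>
    rw [sum_range_succ, ih]
    split_ifs <;> omega

def pathGraphRDF (n : ℕ) (i : Fin n) : Fin 3 :=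
  if i.val % 3 = 1 then 2 else if i.val % 3 = 0 ∧ i.val + 1 = n then 1 else 0

lemma isRDF_pathGraphRDF (n : ℕ) : IsRDF (pathGraph n) (pathGraphRDF n) := by
  intro v hv
  have hv' : v.val % 3 ≠ 1 ∧ ¬(v.val % 3 = 0 ∧ v.val + 1 = n) := by
    unfold pathGraphRDF at hv
    split_ifs at hv with h₁ h₂ <;> first | exact absurd hv (by decide) | exact ⟨h₁, h₂⟩
  obtain h | h : v.val % 3 = 0 ∨ v.val % 3 = 2 := by omega
  · refine ⟨⟨v + 1, by omega⟩, by simp [pathGraph_adj], ?_⟩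
    simp only [pathGraphRDF, if_pos (show (v.val + 1) % 3 = 1 by omega)]
  · refine ⟨⟨v - 1, by omega⟩, by simp [pathGraph_adj]; omega, ?_⟩
    simp only [pathGraphRDF, if_pos (show (v.val - 1) % 3 = 1 by omega)]

lemma romanWeight_pathGraphRDF (n : ℕ) : romanWeight (pathGraphRDF n) = (2 * n + 2) / 3 := by
  cases n with
  | zero => rfl
  | succ m =>
    have hinit (i : Fin m) :
        (pathGraphRDF (m + 1) i.castSucc : ℕ) = if i.val % 3 = 1 then 2 else 0 := by
      simp only [pathGraphRDF, Fin.val_castSucc]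
      split_ifs <;> first | rfl | omega
    have hlast : (pathGraphRDF (m + 1) (Fin.last m) : ℕ) =
        if m % 3 = 1 then 2 else if m % 3 = 0 then 1 else 0 := by
      simp only [pathGraphRDF, Fin.val_last, and_true]
      split_ifs <;> rfl
    rw [romanWeight, Fin.sum_univ_castSucc, sum_congr rfl fun i _ => hinit i, hlast,
      Fin.sum_univ_eq_sum_range (fun i => if i % 3 = 1 then 2 else 0),
      sum_range_ite_mod_three_eq_one]
    split_ifs <;> omega

theorem stmt3_general (n : ℕ) :
    (gammaR (SimpleGraph.pathGraph n) : ℤ) = ⌈(2 * n : ℚ) / 3⌉ := by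
  classical
  rw [gammaR_eq_romanWeight_of_forall_le (isRDF_pathGraphRDF n) fun g hg => ?_,
    romanWeight_pathGraphRDF]
  · have hcast : (2 * n : ℚ) / 3 = ((2 * n : ℕ) : ℚ) / ((3 : ℕ) : ℚ) := by push_cast; rfl
    rw [hcast, Rat.ceil_natCast_div_natCast]
    omega
  · have hlower := hg.two_mul_card_le pathGraph_degree_le_two one_le_two
    rw [Fintype.card_fin] at hlower
    rw [romanWeight_pathGraphRDF]
    omega

theorem stmt3 (n : ℕ) (hn : 1 ≤ n) :
    (gammaR (SimpleGraph.pathGraph n) : ℤ) = ⌈(2 * n : ℚ) / 3⌉ :=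
  stmt3_general n
end

section
/- For any graph G of order n ≥ 2 and integer t ≥ 1, the map g assigning to a word wx ∈ V^t (with w ∈ V^{t-1}, x ∈ V) the value f(x), where f is a Roman dominating function on G, is a Roman dominating function on S(G,t); consequently γ_R(S(G,t)) ≤ n^{t-1} γ_R(G). -/
variable {V : Type*}

lemma Fintype.sum_comp_eval {ι M : Type*} [Fintype ι] [DecidableEq ι] [Fintype V]
    [AddCommMonoid M] (i : ι) (h : V → M) :
    ∑ x : ι → V, h (x i) = Fintype.card V ^ (Fintype.card ι - 1) • ∑ v, h v := by
  rw [Fintype.sum_equiv (Equiv.funSplitAt i V) (fun x => h (x i)) (fun p => h p.1) fun _ => rfl,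
    Fintype.sum_prod_type]
  simp only [Finset.sum_const, Finset.card_univ, ← Finset.smul_sum, Fintype.card_fun,
    Fintype.card_subtype_compl, Fintype.card_unique]

lemma romanWeight_comp_eval [Fintype V] {t : ℕ} (i : Fin t) (f : V → Fin 3) :
    romanWeight (fun x : Fin t → V => f (x i)) = Fintype.card V ^ (t - 1) * romanWeight f := by
  simpa [romanWeight] using Fintype.sum_comp_eval i fun v => (f v : ℕ)

/-- Changing the last letter of a word along an edge of `G` is an edge of `S(G,t)`. -/
lemma IsRDF.comp_eval_of_isMax {G : SimpleGraph V} {f : V → Fin 3} (hf : IsRDF G f) {t : ℕ}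
    {i : Fin t} (hi : IsMax i) : IsRDF (sierpinski G t) (fun x => f (x i)) := by
  intro x hx
  obtain ⟨u, hu, hu2⟩ := hf _ hx
  refine ⟨Function.update x i u, ⟨i, fun j hj => ?_, by simpa using hu,
    fun j hj => absurd hj hi.not_lt⟩, by simpa using hu2⟩
  exact Function.update_of_ne hj.ne u x

lemma gammaR_le_romanWeight [Fintype V] {G : SimpleGraph V} {f : V → Fin 3} (hf : IsRDF G f) :
    gammaR G ≤ romanWeight f :=
  Nat.sInf_le ⟨f, hf, rfl⟩

lemma exists_isRDF_romanWeight_eq_gammaR [Fintype V] (G : SimpleGraph V) :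
    ∃ f, IsRDF G f ∧ romanWeight f = gammaR G := by
  -- the constant function `2` is vacuously Roman dominating
  have hne : {k | ∃ f : V → Fin 3, IsRDF G f ∧ romanWeight f = k}.Nonempty :=
    ⟨_, fun _ => 2, fun _ h => by simp at h, rfl⟩
  exact Nat.sInf_mem hne

theorem stmt7 [Fintype V] (G : SimpleGraph V) (n t : ℕ) (hn : Fintype.card V = n)
    (ht : 1 ≤ t) (f : V → Fin 3) (hf : IsRDF G f) :
    IsRDF (sierpinski G t) (fun x => f (x ⟨t - 1, by omega⟩)) ∧
      gammaR (sierpinski G t) ≤ n ^ (t - 1) * gammaR G := by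
  have hlast : IsMax (⟨t - 1, by omega⟩ : Fin t) :=
    fun j _ => Fin.le_def.2 (Nat.le_sub_one_of_lt j.isLt)
  refine ⟨hf.comp_eval_of_isMax hlast, ?_⟩
  obtain ⟨g, hg, hw⟩ := exists_isRDF_romanWeight_eq_gammaR G
  calc gammaR (sierpinski G t) ≤ romanWeight (fun x : Fin t → V => g (x ⟨t - 1, by omega⟩)) :=
        gammaR_le_romanWeight (hg.comp_eval_of_isMax hlast)
    _ = n ^ (t - 1) * gammaR G := by rw [romanWeight_comp_eval, hn, hw]
end
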